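/- arXiv:1904.12424 — 7 statements merged into one kernel-verified Lean document; each statement's English description precedes it below -/
import Mathlib

section
/- An n-ary Boolean function f is compatible with the relational pair ⟨{1},{0,...,n-2},n⟩ if and only if f does not have n-1 pairwise disjoint onesets. -/
/-- compatibility with ⟨{1},{0,...,n-2},n⟩ iff no n-1 pairwise
disjoint onesets. -/
theorem stmt_3 (m n : ℕ) (hn : 2 ≤ n) (f : Finset (Fin m) → Bool) :
    (∀ T : Fin n → Finset (Fin m),
      (∀ i : Fin m, (Finset.univ.filter (fun j => i ∈ T j)).card = 1) →
      (Finset.univ.filter (fun j => f (T j) = true)).card ≤ n - 2)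
    ↔
    ¬ ∃ U : Fin (n - 1) → Finset (Fin m),
        (∀ i j : Fin (n - 1), i ≠ j → Disjoint (U i) (U j)) ∧ ∀ j, f (U j) = true := by
  constructor
  · rintro h ⟨U, hdisj, hones⟩
    have hlast : n - 1 < n := by omega
    set ι : Fin (n-1) → Fin n := fun k => ⟨k, lt_of_lt_of_le k.2 (Nat.sub_le n 1)⟩ with hι
    set T : Fin n → Finset (Fin m) := fun j =>
      if h : (j : ℕ) < n - 1 then U ⟨j, h⟩
      else Finset.univ \ Finset.univ.biUnion (fun k => U k) with hTdef
    have hcol : ∀ i : Fin m, (Finset.univ.filter (fun j => i ∈ T j)).card = 1 := by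
      intro i
      by_cases hex : ∃ k, i ∈ U k
      · obtain ⟨k, hk⟩ := hex
        have heq : (Finset.univ.filter (fun j => i ∈ T j)) = {ι k} := by
          ext j
          simp only [Finset.mem_filter, Finset.mem_univ, true_and, Finset.mem_singleton]
          constructor
          · intro hj
            by_cases hjlt : (j : ℕ) < n - 1
            · simp only [hTdef, dif_pos hjlt] at hj
              have hkeq : (⟨(j:ℕ), hjlt⟩ : Fin (n-1)) = k := by
                by_contra hne
                exact absurd hk (Finset.disjoint_left.mp (hdisj _ _ hne) hj)
              apply Fin.ext
              simpa [hι] using congrArg Fin.val hkeq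
            · simp only [hTdef, dif_neg hjlt] at hj
              simp only [Finset.mem_sdiff, Finset.mem_biUnion, Finset.mem_univ, true_and] at hj
              exact absurd (⟨k, hk⟩ : ∃ a, i ∈ U a) hj
          · rintro rfl
            have hlt : ((ι k : Fin n) : ℕ) < n - 1 := k.2
            simp only [hTdef, dif_pos hlt]
            convert hk
        rw [heq]; simp
      · have heq : (Finset.univ.filter (fun j => i ∈ T j)) = {(⟨n-1, hlast⟩ : Fin n)} := by
          ext j
          simp only [Finset.mem_filter, Finset.mem_univ, true_and, Finset.mem_singleton]
          constructor
          · intro hj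
            by_cases hjlt : (j : ℕ) < n - 1
            · simp only [hTdef, dif_pos hjlt] at hj
              exact absurd ⟨_, hj⟩ hex
            · have hjn : (j : ℕ) < n := j.2
              apply Fin.ext
              show (j : ℕ) = n - 1
              omega
          · rintro rfl
            have hjlt : ¬ ((n-1 : ℕ) < n - 1) := lt_irrefl _
            simp only [hTdef, dif_neg hjlt]
            simp only [Finset.mem_sdiff, Finset.mem_biUnion, Finset.mem_univ, true_and]
            exact hex
        rw [heq]; simp
    have hcard := h T hcol
    have hsub : Finset.univ.image ι ⊆ Finset.univ.filter (fun j => f (T j) = true) := by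
      intro j hj
      simp only [Finset.mem_image, Finset.mem_univ, true_and] at hj
      obtain ⟨k, rfl⟩ := hj
      simp only [Finset.mem_filter, Finset.mem_univ, true_and]
      have hlt : ((ι k : Fin n) : ℕ) < n - 1 := k.2
      simp only [hTdef, dif_pos hlt]
      convert hones k
    have hinjι : Function.Injective ι := by
      intro a b hab
      have hv : (ι a).val = (ι b).val := congrArg Fin.val hab
      exact Fin.ext hv
    have hcard2 : (Finset.univ.image ι).card = n - 1 := by
      rw [Finset.card_image_of_injective _ hinjι, Finset.card_univ, Fintype.card_fin]
    have hle := Finset.card_le_card hsub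
    omega
  · intro h T hT
    by_contra hbig
    push_neg at hbig
    have hdisjT : ∀ j j' : Fin n, j ≠ j' → Disjoint (T j) (T j') := by
      intro j j' hne
      rw [Finset.disjoint_left]
      intro i hi hi'
      have h1 := hT i
      have hsub : ({j, j'} : Finset (Fin n)) ⊆ Finset.univ.filter (fun j => i ∈ T j) := by
        intro x hx
        simp only [Finset.mem_insert, Finset.mem_singleton] at hx
        rcases hx with rfl | rfl <;> simp [hi, hi']
      have := Finset.card_le_card hsub
      rw [Finset.card_pair hne] at this
      omega
    have hge : n - 1 ≤ (Finset.univ.filter (fun j => f (T j) = true)).card := by omega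
    obtain ⟨S, hS, hScard⟩ := Finset.exists_subset_card_eq hge
    let g := S.orderIsoOfFin hScard
    refine h ⟨fun k => T (g k), ?_, ?_⟩
    · intro a b hab
      exact hdisjT _ _ (fun hgeq => hab (g.injective (Subtype.ext hgeq)))
    · intro k
      have := hS (g k).2
      simpa using this
end

section
/- Let q be a rational with 0 < q < 1. If a symmetric Boolean relation pair ⟨I,J,n⟩ with a ∈ I and b ∉ J (0 ≤ a,b ≤ n) is compatible with all q-threshold functions, then either b > a and q ≥ a/b, or b < a and q ≤ (a−b)/(n−b). -/
open Finset

private lemma mod_inj_of_le {m x y : ℕ} (hle : x ≤ y) (hlt : y - x < m)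
    (h : x % m = y % m) : x = y := by
  have hd := (Nat.modEq_iff_dvd' hle).mp h
  have := Nat.eq_zero_of_dvd_of_lt hd hlt
  omega

private lemma mod_inj {m x y : ℕ} (hlt1 : y - x < m) (hlt2 : x - y < m)
    (h : x % m = y % m) : x = y := by
  rcases le_total x y with hle | hle
  · exact mod_inj_of_le hle hlt1 h
  · exact (mod_inj_of_le hle hlt2 h.symm).symm

private lemma range_filter_mod_card {m i : ℕ} (hm : 0 < m) (hi : i < m) (a : ℕ) :
    ((range (m * a)).filter (fun x => x % m = i)).card = a := by
  induction a with
  | zero => simp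
  | succ a ih =>
    have h1 : m * (a + 1) = m * a + m := by ring
    have hsplit : range (m * (a + 1)) = range (m * a) ∪ Ico (m * a) (m * a + m) := by
      simp only [h1, range_eq_Ico]
      rw [← Finset.Ico_union_Ico_eq_Ico (Nat.zero_le (m * a)) (Nat.le_add_right (m * a) m)]
    have hdisj : Disjoint ((range (m * a)).filter (fun x => x % m = i))
        ((Ico (m * a) (m * a + m)).filter (fun x => x % m = i)) := by
      apply Finset.disjoint_left.mpr
      intro x hx hy
      simp only [mem_filter, mem_range, mem_Ico] at hx hy
      omega
    rw [hsplit, filter_union, card_union_of_disjoint hdisj, ih]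
    have hmod : (m * a + i) % m = i := by
      rw [Nat.mul_add_mod, Nat.mod_eq_of_lt hi]
    have : (Ico (m * a) (m * a + m)).filter (fun x => x % m = i) = {m * a + i} := by
      ext x
      simp only [mem_filter, mem_Ico, mem_singleton]
      constructor
      · rintro ⟨⟨hx1, hx2⟩, hx3⟩
        exact mod_inj (m := m) (by omega) (by omega) (by rw [hx3, hmod])
      · rintro rfl
        exact ⟨⟨by omega, by omega⟩, hmod⟩
    rw [this]
    simp

private lemma sum_block_filter (c' : ℕ → ℕ) (P : ℕ → Prop) [DecidablePred P] (N : ℕ) :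
    ∑ j ∈ range N, ((Ico (∑ x ∈ range j, c' x) (∑ x ∈ range (j + 1), c' x)).filter P).card
      = ((range (∑ x ∈ range N, c' x)).filter P).card := by
  induction N with
  | zero => simp
  | succ N ih =>
    rw [Finset.sum_range_succ _ N, ih]
    have hle : ∑ x ∈ range N, c' x ≤ ∑ x ∈ range (N + 1), c' x := by
      rw [Finset.sum_range_succ]; omega
    have hsplit : range (∑ x ∈ range (N + 1), c' x)
        = range (∑ x ∈ range N, c' x) ∪ Ico (∑ x ∈ range N, c' x) (∑ x ∈ range (N + 1), c' x) := by
      ext x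
      simp only [mem_union, mem_Ico, mem_range]
      omega
    have hdisj : Disjoint ((range (∑ x ∈ range N, c' x)).filter P)
        ((Ico (∑ x ∈ range N, c' x) (∑ x ∈ range (N + 1), c' x)).filter P) := by
      apply Finset.disjoint_left.mpr
      intro x hx hy
      simp only [mem_filter, mem_range, mem_Ico] at hx hy
      omega
    rw [hsplit, filter_union, card_union_of_disjoint hdisj]

private lemma card_filter_lt (n t : ℕ) (h : t ≤ n) :
    (univ.filter (fun j : Fin n => j.val < t)).card = t := by
  rw [← Finset.card_range t]
  apply Finset.card_bij (fun j _ => j.val)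
  · intro j hj
    simp only [mem_filter, mem_univ, true_and] at hj
    simpa using hj
  · intro j1 _ j2 _ hj
    exact Fin.ext hj
  · intro x hx
    simp only [mem_range] at hx
    exact ⟨⟨x, lt_of_lt_of_le hx h⟩, by simp [hx], rfl⟩

private lemma sum_ite_lt (n t v : ℕ) (h : t ≤ n) :
    ∑ j : Fin n, (if j.val < t then v else 0) = t * v := by
  rw [← Finset.sum_filter, Finset.sum_const, card_filter_lt n t h, smul_eq_mul]

private lemma construct (m n a : ℕ) (hm : 0 < m) (c : Fin n → ℕ) (hc : ∀ j, c j ≤ m)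
    (hsum : ∑ j, c j = m * a) :
    ∃ C : Fin n → Finset (Fin m), (∀ j, (C j).card = c j) ∧
      ∀ i : Fin m, (univ.filter (fun j => i ∈ C j)).card = a := by
  classical
  set c' : ℕ → ℕ := fun j => if h : j < n then c ⟨j, h⟩ else 0 with hc'def
  set S : ℕ → ℕ := fun j => ∑ x ∈ range j, c' x with hSdef
  have hc'le : ∀ j, c' j ≤ m := by
    intro j
    simp only [hc'def]
    split
    · exact hc _
    · omega
  have hc'val : ∀ j : Fin n, c' j.val = c j := by
    intro j
    simp [hc'def, j.isLt]
  refine ⟨fun j => (Ico (S j.val) (S j.val + c' j.val)).image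
      (fun x => ⟨x % m, Nat.mod_lt x hm⟩), ?_, ?_⟩
  · intro j
    rw [Finset.card_image_of_injOn, Nat.card_Ico, hc'val]
    · omega
    · intro x hx y hy hxy
      simp only [mem_coe, mem_Ico] at hx hy
      have := hc'le j.val
      exact mod_inj (m := m) (by omega) (by omega) (congrArg Fin.val hxy)
  · intro i
    have hmem : ∀ j : Fin n,
        (i ∈ (Ico (S j.val) (S j.val + c' j.val)).image (fun x => (⟨x % m, Nat.mod_lt x hm⟩ : Fin m)))
          ↔ ∃ x, (S j.val ≤ x ∧ x < S j.val + c' j.val) ∧ x % m = i.val := by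
      intro j
      simp [Finset.mem_image, Fin.ext_iff, mem_Ico]
    have hkey : ∀ j : Fin n,
        (if i ∈ (Ico (S j.val) (S j.val + c' j.val)).image (fun x => (⟨x % m, Nat.mod_lt x hm⟩ : Fin m)) then 1 else 0)
          = ((Ico (S j.val) (S j.val + c' j.val)).filter (fun x => x % m = i.val)).card := by
      intro j
      by_cases hij : i ∈ (Ico (S j.val) (S j.val + c' j.val)).image (fun x => (⟨x % m, Nat.mod_lt x hm⟩ : Fin m))
      · rw [if_pos hij]
        obtain ⟨x, hx1, hx2⟩ := (hmem j).mp hij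
        have hne : ((Ico (S j.val) (S j.val + c' j.val)).filter (fun x => x % m = i.val)).Nonempty :=
          ⟨x, by simp [mem_filter, mem_Ico, hx1.1, hx1.2, hx2]⟩
        have hle1 : ((Ico (S j.val) (S j.val + c' j.val)).filter (fun x => x % m = i.val)).card ≤ 1 := by
          apply Finset.card_le_one.mpr
          intro y hy z hz
          simp only [mem_filter, mem_Ico] at hy hz
          have := hc'le j.val
          exact mod_inj (m := m) (by omega) (by omega) (by rw [hy.2, hz.2])
        have := Finset.card_pos.mpr hne
        omega
      · rw [if_neg hij]
        symm
        rw [Finset.card_eq_zero, Finset.filter_eq_empty_iff]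
        intro x hx
        simp only [mem_Ico] at hx
        exact fun hmod => hij ((hmem j).mpr ⟨x, hx, hmod⟩)
    rw [Finset.card_filter]
    calc ∑ j : Fin n, (if i ∈ (Ico (S j.val) (S j.val + c' j.val)).image (fun x => (⟨x % m, Nat.mod_lt x hm⟩ : Fin m)) then 1 else 0)
        = ∑ j : Fin n, ((Ico (S j.val) (S j.val + c' j.val)).filter (fun x => x % m = i.val)).card := by
          exact Finset.sum_congr rfl (fun j _ => hkey j)
      _ = ∑ j ∈ range n, ((Ico (S j) (S j + c' j)).filter (fun x => x % m = i.val)).card := by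
          exact Fin.sum_univ_eq_sum_range (fun j => ((Ico (S j) (S j + c' j)).filter (fun x => x % m = i.val)).card) n
      _ = a := by
          have hS1 : ∀ j : ℕ, S j + c' j = ∑ x ∈ range (j + 1), c' x := by
            intro j
            rw [hSdef]
            simp [Finset.sum_range_succ]
          simp only [hS1]
          rw [sum_block_filter c' (fun x => x % m = i.val) n]
          have hSn : ∑ x ∈ range n, c' x = m * a := by
            rw [← hsum, ← Fin.sum_univ_eq_sum_range (fun j => c' j) n]
            exact Finset.sum_congr rfl (fun j _ => hc'val j)
          rw [hSn]
          exact range_filter_mod_card hm i.isLt a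

private lemma exists_m (q : ℚ) (hq0 : 0 < q) (hq1 : q < 1) (ε B : ℚ) (hε : 0 < ε) :
    ∃ m : ℕ, 0 < m ∧ (¬ ∃ z : ℤ, (m : ℚ) * q = z) ∧ B ≤ (m : ℚ) * ε := by
  obtain ⟨k, hk⟩ := exists_nat_ge (B / ε)
  refine ⟨1 + q.den * k, Nat.lt_of_lt_of_le Nat.zero_lt_one (Nat.le_add_right 1 _), ?_, ?_⟩
  · rintro ⟨z, hz⟩
    have hden : (q.den : ℚ) * q = q.num := by
      rw [mul_comm, Rat.mul_den_eq_num]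
    have hz' : q = ((z - k * q.num : ℤ) : ℚ) := by
      push_cast at hz ⊢
      nlinarith [hden]
    have h0 : (0 : ℚ) < ((z - k * q.num : ℤ) : ℚ) := hz' ▸ hq0
    have h1 : ((z - k * q.num : ℤ) : ℚ) < 1 := hz' ▸ hq1
    have h0' : 0 < z - k * q.num := by exact_mod_cast h0
    have h1' : z - k * q.num < 1 := by exact_mod_cast h1
    omega
  · have hden1 : (1 : ℚ) ≤ q.den := by exact_mod_cast q.pos
    have hB : B ≤ k * ε := by
      rw [div_le_iff₀ hε] at hk
      linarith
    have hk0 : (0 : ℚ) ≤ k := Nat.cast_nonneg k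
    have h2 : (k : ℚ) ≤ 1 + (q.den : ℚ) * k := by
      nlinarith [mul_nonneg (sub_nonneg.mpr hden1) hk0]
    have h3 : (k : ℚ) * ε ≤ (1 + (q.den : ℚ) * k) * ε := mul_le_mul_of_nonneg_right h2 hε.le
    push_cast
    linarith

/-- if ⟨I,J,n⟩ with a ∈ I, b ∉ J is compatible with all
q-threshold functions then b > a and q ≥ a/b, or b < a and q ≤ (a−b)/(n−b). -/
theorem stmt_5 (n a b : ℕ) (I J : Set ℕ) (q : ℚ) (hq0 : 0 < q) (hq1 : q < 1)
    (haI : a ∈ I) (hbJ : b ∉ J) (han : a ≤ n) (hbn : b ≤ n)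
    (hcompat : ∀ m : ℕ, (¬ ∃ z : ℤ, (m : ℚ) * q = (z : ℚ)) →
      ∀ C : Fin n → Finset (Fin m),
        (∀ i : Fin m, (Finset.univ.filter (fun j : Fin n => i ∈ C j)).card ∈ I) →
        (Finset.univ.filter
          (fun j : Fin n => decide ((m : ℚ) * q < ((C j).card : ℚ)) = true)).card ∈ J) :
    (a < b ∧ (a : ℚ) / (b : ℚ) ≤ q) ∨
    (b < a ∧ q ≤ ((a : ℚ) - (b : ℚ)) / ((n : ℚ) - (b : ℚ))) := by
  classical
  have key : ∀ m : ℕ, 0 < m → (¬ ∃ z : ℤ, (m : ℚ) * q = z) → ∀ c : Fin n → ℕ,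
      (∀ j, c j ≤ m) → (∑ j, c j = m * a) →
      (univ.filter (fun j : Fin n => (m : ℚ) * q < (c j : ℚ))).card ∈ J := by
    intro m hm hirr c hc hsum
    obtain ⟨C, hCcard, hCrow⟩ := construct m n a hm c hc hsum
    have h := hcompat m hirr C (fun i => by rw [hCrow i]; exact haI)
    have heqf : (univ.filter (fun j : Fin n => decide ((m : ℚ) * q < ((C j).card : ℚ)) = true))
        = univ.filter (fun j : Fin n => (m : ℚ) * q < (c j : ℚ)) := by
      apply Finset.filter_congr
      intro j _
      simp [hCcard j]
    rwa [heqf] at h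
  rcases lt_trichotomy a b with hlt | heq | hgt
  · -- a < b : show a/b ≤ q
    left
    refine ⟨hlt, ?_⟩
    by_contra hqa
    push_neg at hqa
    have hb : 0 < b := Nat.lt_of_le_of_lt (Nat.zero_le a) hlt
    have hb' : (0 : ℚ) < b := by exact_mod_cast hb
    have hε : 0 < (a : ℚ) - b * q := by
      rw [lt_div_iff₀ hb'] at hqa
      linarith
    obtain ⟨m, hm, hirr, hbound⟩ := exists_m q hq0 hq1 _ (b : ℚ) hε
    set d := m * a / b with hd
    set r := m * a % b with hr
    have hdr : b * d + r = m * a := Nat.div_add_mod (m * a) b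
    have hrb : r < b := Nat.mod_lt _ hb
    have hdm : d < m := by
      rw [hd, Nat.div_lt_iff_lt_mul hb]
      exact (Nat.mul_lt_mul_left hm).mpr hlt
    have hdrQ : (b : ℚ) * d + r = m * a := by exact_mod_cast hdr
    have hrbQ : (r : ℚ) < b := by exact_mod_cast hrb
    have hdq : (m : ℚ) * q < d := by nlinarith [hbound, hdrQ, hrbQ, hb']
    set c : Fin n → ℕ := fun j => if j.val < r then d + 1 else if j.val < b then d else 0 with hcdef
    have hcle : ∀ j, c j ≤ m := by
      intro j
      rw [hcdef]
      dsimp only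
      split_ifs <;> omega
    have hcsum : ∑ j, c j = m * a := by
      have hsplit : ∀ j : Fin n, c j = (if j.val < b then d else 0) + (if j.val < r then 1 else 0) := by
        intro j
        rw [hcdef]
        dsimp only
        split_ifs <;> omega
      rw [Finset.sum_congr rfl (fun j _ => hsplit j), Finset.sum_add_distrib,
        sum_ite_lt n b d hbn, sum_ite_lt n r 1 (le_trans hrb.le hbn)]
      omega
    have hcount : (univ.filter (fun j : Fin n => (m : ℚ) * q < (c j : ℚ))).card = b := by
      have heq2 : (univ.filter (fun j : Fin n => (m : ℚ) * q < (c j : ℚ)))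
          = univ.filter (fun j : Fin n => j.val < b) := by
        apply Finset.filter_congr
        intro j _
        rw [hcdef]
        dsimp only
        split_ifs with h1 h2
        · constructor
          · intro _; omega
          · intro _; push_cast; linarith
        · constructor
          · intro _; exact h2
          · intro _; exact hdq
        · constructor
          · intro hcon
            exfalso
            have : (0 : ℚ) < (m : ℚ) * q := mul_pos (by exact_mod_cast hm) hq0
            simp only [Nat.cast_zero] at hcon
            linarith
          · intro hjb; omega
      rw [heq2, card_filter_lt n b hbn]
    exact hbJ (hcount ▸ key m hm hirr c hcle hcsum)
  · -- a = b : contradiction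
    exfalso
    apply hbJ
    have hirr1 : ¬ ∃ z : ℤ, ((1 : ℕ) : ℚ) * q = z := by
      rintro ⟨z, hz⟩
      have hz' : q = (z : ℚ) := by push_cast at hz; linarith
      have h0' : 0 < z := by exact_mod_cast hz' ▸ hq0
      have h1' : z < 1 := by exact_mod_cast hz' ▸ hq1
      omega
    set c : Fin n → ℕ := fun j => if j.val < a then 1 else 0 with hcdef
    have hcle : ∀ j, c j ≤ 1 := by
      intro j; rw [hcdef]; dsimp only; split_ifs <;> omega
    have hcsum : ∑ j, c j = 1 * a := by
      rw [hcdef]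
      dsimp only
      rw [sum_ite_lt n a 1 han]
      ring
    have h := key 1 Nat.one_pos hirr1 c hcle hcsum
    have hcount : (univ.filter (fun j : Fin n => ((1 : ℕ) : ℚ) * q < (c j : ℚ))).card = b := by
      have heq2 : (univ.filter (fun j : Fin n => ((1 : ℕ) : ℚ) * q < (c j : ℚ)))
          = univ.filter (fun j : Fin n => j.val < a) := by
        apply Finset.filter_congr
        intro j _
        rw [hcdef]
        dsimp only
        split_ifs with h1
        · constructor
          · intro _; exact h1
          · intro _; push_cast; linarith
        · constructor
          · intro hcon; exfalso; push_cast at hcon; linarith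
          · intro hcon; exact absurd hcon h1
      rw [heq2, card_filter_lt n a han, heq]
    rwa [hcount] at h
  · -- b < a
    right
    refine ⟨hgt, ?_⟩
    by_cases haneq : a = n
    · subst haneq
      have hne : ((a : ℚ) - b) ≠ 0 := by
        have : (b : ℚ) < a := by exact_mod_cast hgt
        linarith
      rw [div_self hne]
      linarith
    · have hanlt : a < n := lt_of_le_of_ne han haneq
      by_contra hqc
      push_neg at hqc
      obtain ⟨t, ht⟩ : ∃ t, a = b + t := ⟨a - b, by omega⟩
      obtain ⟨n', hn⟩ : ∃ n', n = b + n' := ⟨n - b, by omega⟩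
      subst ht
      subst hn
      have htpos : 0 < t := by omega
      have hn'pos : 0 < n' := by omega
      have htn' : t < n' := by omega
      have hn'Q : (0 : ℚ) < n' := by exact_mod_cast hn'pos
      have hqc' : (t : ℚ) / n' < q := by
        have e1 : ((b : ℚ) + t) - b = (t : ℚ) := by ring
        have e2 : ((b : ℚ) + n') - b = (n' : ℚ) := by ring
        rw [Nat.cast_add, Nat.cast_add, e1, e2] at hqc
        exact hqc
      have hε : 0 < (n' : ℚ) * q - t := by
        rw [div_lt_iff₀ hn'Q] at hqc'
        linarith
      obtain ⟨m, hm, hirr, hbound⟩ := exists_m q hq0 hq1 _ (n' : ℚ) hε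
      set e := m * t with hedef
      set d := e / n' with hd
      set r := e % n' with hr
      have hdr : n' * d + r = e := Nat.div_add_mod e n'
      have hrn' : r < n' := Nat.mod_lt _ hn'pos
      have hdm : d < m := by
        rw [hd, Nat.div_lt_iff_lt_mul hn'pos]
        exact (Nat.mul_lt_mul_left hm).mpr htn'
      have hdrQ : (n' : ℚ) * d + r = m * t := by exact_mod_cast hdr
      have hrQ : (0 : ℚ) ≤ r := Nat.cast_nonneg r
      have hd1q : (d : ℚ) + 1 ≤ (m : ℚ) * q := by nlinarith [hbound, hdrQ, hrQ, hn'Q]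
      set c : Fin (b + n') → ℕ := fun j =>
        if j.val < b then m else if j.val < b + r then d + 1 else d with hcdef
      have hcle : ∀ j, c j ≤ m := by
        intro j; rw [hcdef]; dsimp only; split_ifs <;> omega
      obtain ⟨s, hs⟩ : ∃ s, m = d + 1 + s := ⟨m - (d + 1), by omega⟩
      have hcsum : ∑ j, c j = m * (b + t) := by
        have hsplit : ∀ j : Fin (b + n'), c j
            = d + ((if j.val < b + r then 1 else 0) + (if j.val < b then s else 0)) := by
          intro j
          rw [hcdef]
          dsimp only
          split_ifs <;> omega
        rw [Finset.sum_congr rfl (fun j _ => hsplit j), Finset.sum_add_distrib,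
          Finset.sum_add_distrib, Finset.sum_const, sum_ite_lt (b + n') (b + r) 1 (by omega),
          sum_ite_lt (b + n') b s (by omega), card_univ, Fintype.card_fin, smul_eq_mul]
        -- goal : (b+n')*d + ((b+r)*1 + b*s) = m*(b+t)
        have hZ : ((b : ℤ) + n') * d + ((b + r) * 1 + b * s) = (m : ℤ) * (b + t) := by
          have h2 : (n' : ℤ) * d + r = m * t := by exact_mod_cast hdr
          have h3 : (m : ℤ) = d + 1 + s := by exact_mod_cast hs
          linear_combination h2 - (b : ℤ) * h3
        exact_mod_cast hZ
      have hcount : (univ.filter (fun j : Fin (b + n') => (m : ℚ) * q < (c j : ℚ))).card = b := by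
        have heq2 : (univ.filter (fun j : Fin (b + n') => (m : ℚ) * q < (c j : ℚ)))
            = univ.filter (fun j : Fin (b + n') => j.val < b) := by
          apply Finset.filter_congr
          intro j _
          rw [hcdef]
          dsimp only
          have hm' : (0 : ℚ) < m := by exact_mod_cast hm
          split_ifs with h1 h2
          · constructor
            · intro _; exact h1
            · intro _; nlinarith
          · constructor
            · intro hcon
              exfalso
              rw [Nat.cast_add, Nat.cast_one] at hcon
              linarith
            · intro hjb; exact absurd hjb h1
          · constructor
            · intro hcon
              exfalso
              linarith
            · intro hjb; exact absurd hjb h1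
        rw [heq2, card_filter_lt (b + n') b (by omega)]
      exact hbJ (hcount ▸ key m hm hirr c hcle hcsum)
end

section
/- Let f be an n-ary Boolean function compatible with the pairs ⟨{c},{1,...,c+1},c+1⟩ and ⟨{1},{0,...,m−2},m⟩ (the latter meaning f has no m−1 pairwise disjoint onesets). Then f cannot have (m−1)·c pairwise disjoint zerosets. -/
/-- if unions of c disjoint zerosets are onesets and there are
no m−1 disjoint onesets, then there are no (m−1)·c disjoint zerosets. -/
theorem stmt_11 (n c m : ℕ) (f : Finset (Fin n) → Bool)
    (hunion : ∀ V : Fin c → Finset (Fin n),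
      (∀ i j : Fin c, i ≠ j → Disjoint (V i) (V j)) → (∀ j, f ((V j)ᶜ) = false) →
      f (Finset.univ.biUnion V) = true)
    (hones : ¬ ∃ U : Fin (m - 1) → Finset (Fin n),
      (∀ i j : Fin (m - 1), i ≠ j → Disjoint (U i) (U j)) ∧ ∀ j, f (U j) = true) :
    ¬ ∃ U : Fin ((m - 1) * c) → Finset (Fin n),
      (∀ i j : Fin ((m - 1) * c), i ≠ j → Disjoint (U i) (U j)) ∧
      ∀ j, f ((U j)ᶜ) = false := by
  rintro ⟨U, hdisj, hzero⟩
  -- index embedding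
  have hlt : ∀ (k : Fin (m - 1)) (j : Fin c), k.val * c + j.val < (m - 1) * c := by
    intro k j
    calc k.val * c + j.val < k.val * c + c := by omega
      _ = (k.val + 1) * c := by ring
      _ ≤ (m - 1) * c := Nat.mul_le_mul_right c (by omega)
  set idx : Fin (m - 1) → Fin c → Fin ((m - 1) * c) :=
    fun k j => ⟨k.val * c + j.val, hlt k j⟩ with hidx
  have hinj : ∀ k₁ j₁ k₂ j₂, idx k₁ j₁ = idx k₂ j₂ → k₁ = k₂ ∧ j₁ = j₂ := by
    intro k₁ j₁ k₂ j₂ h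
    have h' : k₁.val * c + j₁.val = k₂.val * c + j₂.val := congrArg Fin.val h
    have hj₁ : j₁.val < c := j₁.isLt
    have hj₂ : j₂.val < c := j₂.isLt
    have hk : k₁.val = k₂.val := by
      rcases lt_trichotomy k₁.val k₂.val with hlt' | he | hlt'
      · exfalso
        have : k₁.val + 1 ≤ k₂.val := hlt'
        have := Nat.mul_le_mul_right c this
        nlinarith
      · exact he
      · exfalso
        have : k₂.val + 1 ≤ k₁.val := hlt'
        have := Nat.mul_le_mul_right c this
        nlinarith
    rw [hk] at h'
    exact ⟨Fin.ext hk, Fin.ext (by omega)⟩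
  set W : Fin (m - 1) → Finset (Fin n) :=
    fun k => Finset.univ.biUnion (fun j : Fin c => U (idx k j)) with hW
  apply hones
  refine ⟨W, ?_, ?_⟩
  · intro i j hij
    simp only [hW, Finset.disjoint_biUnion_left, Finset.disjoint_biUnion_right]
    intro a _ b _
    apply hdisj
    intro h
    exact hij ((hinj _ _ _ _ h).1)
  · intro k
    apply hunion
    · intro i j hij
      apply hdisj
      intro h
      exact hij ((hinj _ _ _ _ h).2)
    · intro j
      exact hzero _
end

section
/- Every almost negation is a minor of an alternating threshold: for every k ≥ 1, the (k+2)-ary almost negation AN_{k+2} satisfies AN_{k+2}(x_1,...,x_{k+2}) = AT_{2k+1}(x_{k+2},...,x_{k+2}, x_1,...,x_{k+1}), where x_{k+2} is repeated k times and AT_{2k+1} is the (2k+1)-ary alternating threshold. Moreover, each almost negation AN_m is a minor of AN_{m+1} (obtained by identifying two of the first m variables). -/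
/-- The almost negation of arity m+1. -/
def AN (m : ℕ) (y : Fin (m + 1) → Bool) : Bool :=
  if ∀ j, y j = true then true
  else if ∀ j, y j = false then false
  else ! y (Fin.last m)

/-- The alternating threshold of arity 2k+1. -/
def AT (k : ℕ) (x : Fin (2 * k + 1) → Bool) : Bool :=
  decide ((∑ i : Fin (2 * k + 1), if (i : ℕ) < k then (x i).toNat else 0) <
    (∑ i : Fin (2 * k + 1), if (i : ℕ) < k then 0 else (x i).toNat))

/-- every almost negation is a minor of an alternating threshold,
and each almost negation is a minor of the next one. -/
theorem stmt_14 :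
    (∀ k : ℕ, 1 ≤ k → ∀ x : Fin (k + 2) → Bool,
      AN (k + 1) x =
        AT k (fun j : Fin (2 * k + 1) =>
          x (if h : (j : ℕ) < k then Fin.last (k + 1)
             else ⟨(j : ℕ) - k, by have := j.isLt; omega⟩)))
    ∧
    (∀ m : ℕ, ∀ x : Fin (m + 1) → Bool,
      AN m x =
        AN (m + 1) (fun j : Fin (m + 2) =>
          x (if h : (j : ℕ) = 0 then 0
             else ⟨(j : ℕ) - 1, by have := j.isLt; omega⟩))) := by
  constructor
  · intro k hk x
    simp only [AT]
    have hcast : k + (k + 1) = 2 * k + 1 := by omega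
    have h1 : (∑ i : Fin (2 * k + 1), if (i : ℕ) < k then
        (x (if h : (i : ℕ) < k then Fin.last (k + 1)
            else ⟨(i : ℕ) - k, by have := i.isLt; omega⟩)).toNat else 0)
        = k * (x (Fin.last (k + 1))).toNat := by
      rw [← Fin.sum_congr' _ hcast, Fin.sum_univ_add]
      have e1 : (∑ i : Fin k, (x (Fin.last (k+1))).toNat) + (∑ _i : Fin (k+1), (0:ℕ))
          = k * (x (Fin.last (k + 1))).toNat := by
        simp [mul_comm]
      rw [← e1]
      refine congrArg₂ (· + ·) (Finset.sum_congr rfl fun i _ => ?_)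
        (Finset.sum_congr rfl fun i _ => ?_)
      · have hi : ((Fin.cast hcast (Fin.castAdd (k+1) i) : Fin (2*k+1)) : ℕ) < k := i.isLt
        rw [if_pos hi, dif_pos hi]
      · have hi : ¬ ((Fin.cast hcast (Fin.natAdd k i) : Fin (2*k+1)) : ℕ) < k := by
          show ¬ k + (i : ℕ) < k; omega
        rw [if_neg hi]
    have h2 : (∑ i : Fin (2 * k + 1), if (i : ℕ) < k then 0 else
        (x (if h : (i : ℕ) < k then Fin.last (k + 1)
            else ⟨(i : ℕ) - k, by have := i.isLt; omega⟩)).toNat)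
        = ∑ j : Fin (k + 1), (x j.castSucc).toNat := by
      rw [← Fin.sum_congr' _ hcast, Fin.sum_univ_add]
      have e1 : (∑ _i : Fin k, (0:ℕ)) + (∑ j : Fin (k+1), (x j.castSucc).toNat)
          = ∑ j : Fin (k + 1), (x j.castSucc).toNat := by simp
      rw [← e1]
      refine congrArg₂ (· + ·) (Finset.sum_congr rfl fun i _ => ?_)
        (Finset.sum_congr rfl fun i _ => ?_)
      · have hi : ((Fin.cast hcast (Fin.castAdd (k+1) i) : Fin (2*k+1)) : ℕ) < k := i.isLt
        rw [if_pos hi]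
      · have hi : ¬ ((Fin.cast hcast (Fin.natAdd k i) : Fin (2*k+1)) : ℕ) < k := by
          show ¬ k + (i : ℕ) < k; omega
        rw [if_neg hi, dif_neg hi]
        exact congrArg (fun t => (x t).toNat)
          (Fin.ext (show k + (i : ℕ) - k = (i : ℕ) by omega))
    rw [h1, h2]
    set S := ∑ j : Fin (k + 1), (x j.castSucc).toNat with hS
    simp only [AN]
    by_cases hall : ∀ j : Fin (k + 2), x j = true
    · have hSval : S = k + 1 := by
        rw [hS, Finset.sum_congr rfl (fun j _ => by rw [hall j.castSucc, Bool.toNat_true])]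
        simp
      rw [if_pos hall, hall (Fin.last (k+1)), hSval]
      simp only [Bool.toNat_true, Nat.mul_one]
      exact (decide_eq_true (by omega)).symm
    · rw [if_neg hall]
      by_cases hnone : ∀ j : Fin (k + 2), x j = false
      · have hSval : S = 0 := by
          rw [hS, Finset.sum_congr rfl (fun j _ => by rw [hnone j.castSucc, Bool.toNat_false])]
          simp
        rw [if_pos hnone, hnone (Fin.last (k+1)), hSval]
        simp
      · rw [if_neg hnone]
        cases hlast : x (Fin.last (k+1))
        · -- x last = false; result is true, i.e. 0 < S
          have hex : ∃ j : Fin (k+1), x j.castSucc = true := by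
            push_neg at hnone
            obtain ⟨j, hj⟩ := hnone
            rcases Fin.eq_castSucc_or_eq_last j with ⟨j', rfl⟩ | rfl
            · exact ⟨j', Bool.ne_false_iff.mp hj⟩
            · exact absurd hlast hj
          obtain ⟨j₀, hj₀⟩ := hex
          have hpos : 0 < S := by
            apply Finset.sum_pos' (fun i _ => Nat.zero_le _)
            exact ⟨j₀, Finset.mem_univ _, by rw [hj₀]; norm_num⟩
          simp only [Bool.toNat_false, Nat.mul_zero, Bool.not_false]
          exact (decide_eq_true hpos).symm
        · -- x last = true; result is false, i.e. S ≤ k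
          have hex : ∃ j : Fin (k+1), x j.castSucc = false := by
            push_neg at hall
            obtain ⟨j, hj⟩ := hall
            rcases Fin.eq_castSucc_or_eq_last j with ⟨j', rfl⟩ | rfl
            · exact ⟨j', Bool.eq_false_iff.mpr hj⟩
            · exact absurd hlast hj
          obtain ⟨j₀, hj₀⟩ := hex
          have hlt : S < ∑ _j : Fin (k+1), 1 := by
            apply Finset.sum_lt_sum (fun i _ => Bool.toNat_le _)
            exact ⟨j₀, Finset.mem_univ _, by rw [hj₀]; norm_num⟩
          have hle : S ≤ k := by
            have : (∑ _j : Fin (k+1), 1) = k + 1 := by simp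
            omega
          simp only [Bool.toNat_true, Nat.mul_one, Bool.not_true]
          exact (decide_eq_false (by omega)).symm
  · intro m x
    set y : Fin (m + 2) → Bool := fun j : Fin (m + 2) =>
      x (if h : (j : ℕ) = 0 then 0 else ⟨(j : ℕ) - 1, by have := j.isLt; omega⟩) with hy
    have hyx : ∀ i : Fin (m + 1), y i.succ = x i := by
      intro i
      rw [hy]
      simp only
      rw [dif_neg (show ((i.succ : Fin (m+2)) : ℕ) ≠ 0 by simp [Fin.val_succ])]
      exact congrArg x (Fin.ext (show (i : ℕ) + 1 - 1 = (i : ℕ) by omega))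
    have hy0 : y 0 = x 0 := by rw [hy]; simp only; rw [dif_pos (Fin.val_zero _)]
    have hiff1 : (∀ j : Fin (m + 2), y j = true) ↔ (∀ j : Fin (m + 1), x j = true) := by
      constructor
      · intro h j; rw [← hyx j]; exact h _
      · intro h j
        rcases Fin.eq_zero_or_eq_succ j with rfl | ⟨j', rfl⟩
        · rw [hy0]; exact h 0
        · rw [hyx j']; exact h j'
    have hiff2 : (∀ j : Fin (m + 2), y j = false) ↔ (∀ j : Fin (m + 1), x j = false) := by
      constructor
      · intro h j; rw [← hyx j]; exact h _
      · intro h j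
        rcases Fin.eq_zero_or_eq_succ j with rfl | ⟨j', rfl⟩
        · rw [hy0]; exact h 0
        · rw [hyx j']; exact h j'
    have hlast : y (Fin.last (m + 1)) = x (Fin.last m) := by
      have hl : (Fin.last (m + 1)) = (Fin.last m).succ := by
        apply Fin.ext; simp [Fin.val_succ]
      rw [hl, hyx]
    simp only [AN]
    rw [hlast]
    by_cases h1 : ∀ j : Fin (m + 1), x j = true
    · rw [if_pos h1, if_pos (hiff1.mpr h1)]
    · rw [if_neg h1, if_neg (fun h => h1 (hiff1.mp h))]
      by_cases h2 : ∀ j : Fin (m + 1), x j = false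
      · rw [if_pos h2, if_pos (hiff2.mpr h2)]
      · rw [if_neg h2, if_neg (fun h => h2 (hiff2.mp h))]
end

section
/- Let M be an idempotent minion of Boolean functions such that: (a) there is a constant N with every f ∈ M having a 1-fixing set of size at most N, and (b) there is a constant K with no f ∈ M having K pairwise disjoint onesets. Then there exists ε > 0 and an assignment, to each f ∈ M, of a probability distribution on the coordinates of f, such that for any minor identity f(x_1,...,x_n) = g(x_{π(1)},...,x_{π(m)}) satisfied in M, sampling a coordinate i for f and independently a coordinate j for g, the probability that i = π(j) is greater than ε. -/
/-- A "good" support set for `f`: nonempty, of size at most `N*K`, containing a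
1-fixing set of size at most `N`, and meeting every 1-fixing set of size at most `N`. -/
def GoodSupp (N K n : ℕ) (f : Finset (Fin n) → Bool) (U : Finset (Fin n)) : Prop :=
  U.Nonempty ∧ U.card ≤ N * K ∧
  (∃ W ⊆ U, W.card ≤ N ∧ ∀ V, W ⊆ V → f V = true) ∧
  (∀ W : Finset (Fin n), W.card ≤ N → (∀ V, W ⊆ V → f V = true) → (W ∩ U).Nonempty)

lemma exists_goodSupp (N K n : ℕ) (f : Finset (Fin n) → Bool)
    (hf0 : f ∅ = false)
    (hfix : ∃ W : Finset (Fin n), W.card ≤ N ∧ ∀ V, W ⊆ V → f V = true)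
    (hanti : ¬ ∃ U : Fin K → Finset (Fin n),
        (∀ i j : Fin K, i ≠ j → Disjoint (U i) (U j)) ∧ ∀ j, f (U j) = true) :
    ∃ U, GoodSupp N K n f U := by
  classical
  obtain ⟨W₀, hW₀card, hW₀fix⟩ := hfix
  set P : Finset (Finset (Fin n)) → Prop := fun C =>
    (∀ A ∈ C, A.card ≤ N ∧ ∀ V, A ⊆ V → f V = true) ∧
    (↑C : Set (Finset (Fin n))).Pairwise Disjoint with hPdef
  have hP0 : P {W₀} := by
    constructor
    · intro A hA
      simp only [Finset.mem_singleton] at hA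
      subst hA; exact ⟨hW₀card, hW₀fix⟩
    · simp [Set.pairwise_singleton]
  have hne : (Finset.univ.filter P).Nonempty :=
    ⟨{W₀}, Finset.mem_filter.2 ⟨Finset.mem_univ _, hP0⟩⟩
  obtain ⟨C, hCmem, hCmax⟩ := Finset.exists_max_image (Finset.univ.filter P) Finset.card hne
  rw [Finset.mem_filter] at hCmem
  have hC : P C := hCmem.2
  -- members are nonempty 1-fixing sets of size ≤ N
  have hmemne : ∀ A ∈ C, A.Nonempty := by
    intro A hA
    rcases Finset.eq_empty_or_nonempty A with h | h
    · exfalso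
      have := (hC.1 A hA).2 ∅ (by simp [h])
      rw [hf0] at this; exact Bool.false_ne_true this
    · exact h
  -- C has at most K members
  have hCcard : C.card ≤ K := by
    by_contra h
    push_neg at h
    have hKle : K ≤ C.card := le_of_lt h
    have : Nonempty (Fin K ↪ {A // A ∈ C}) := by
      rw [Function.Embedding.nonempty_iff_card_le]
      simpa using hKle
    obtain ⟨e⟩ := this
    refine hanti ⟨fun i => (e i : Finset (Fin n)), ?_, ?_⟩
    · intro i j hij
      refine hC.2 (e i).2 (e j).2 ?_
      intro hEq
      exact hij (e.injective (Subtype.ext hEq))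
    · intro j
      exact (hC.1 _ (e j).2).2 _ (le_refl _)
  have hCne : C.Nonempty := by
    rw [← Finset.card_pos]
    have h1 : ({W₀} : Finset (Finset (Fin n))).card ≤ C.card :=
      hCmax {W₀} (Finset.mem_filter.2 ⟨Finset.mem_univ _, hP0⟩)
    simpa using h1
  refine ⟨C.biUnion id, ?_, ?_, ?_, ?_⟩
  · -- nonempty
    obtain ⟨A, hA⟩ := hCne
    obtain ⟨a, ha⟩ := hmemne A hA
    exact ⟨a, Finset.mem_biUnion.2 ⟨A, hA, ha⟩⟩
  · -- card bound
    have hdisj : ∀ x ∈ C, ∀ y ∈ C, x ≠ y → Disjoint (id x) (id y) := by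
      intro x hx y hy hxy
      exact hC.2 hx hy hxy
    calc (C.biUnion id).card = ∑ A ∈ C, A.card := Finset.card_biUnion hdisj
      _ ≤ ∑ _A ∈ C, N := Finset.sum_le_sum (fun A hA => (hC.1 A hA).1)
      _ = C.card * N := by rw [Finset.sum_const, smul_eq_mul]
      _ ≤ K * N := Nat.mul_le_mul_right _ hCcard
      _ = N * K := Nat.mul_comm _ _
  · -- contains a 1-fixing set
    obtain ⟨A, hA⟩ := hCne
    exact ⟨A, fun a ha => Finset.mem_biUnion.2 ⟨A, hA, ha⟩, (hC.1 A hA).1, (hC.1 A hA).2⟩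
  · -- meets every small 1-fixing set
    intro W hWcard hWfix
    by_contra hint
    rw [Finset.not_nonempty_iff_eq_empty] at hint
    have hWne : W.Nonempty := by
      rcases Finset.eq_empty_or_nonempty W with h | h
      · exfalso
        have := hWfix ∅ (by simp [h])
        rw [hf0] at this; exact Bool.false_ne_true this
      · exact h
    have hWU : ∀ A ∈ C, Disjoint W A := by
      intro A hA
      rw [Finset.disjoint_left]
      intro a haW haA
      have : a ∈ W ∩ C.biUnion id :=
        Finset.mem_inter.2 ⟨haW, Finset.mem_biUnion.2 ⟨A, hA, haA⟩⟩
      rw [hint] at this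
      exact absurd this (Finset.notMem_empty a)
    have hWnotin : W ∉ C := by
      intro hW
      have := hWU W hW
      rw [disjoint_self] at this
      exact hWne.ne_empty (by simpa using this)
    have hP' : P (insert W C) := by
      constructor
      · intro A hA
        rcases Finset.mem_insert.1 hA with h | h
        · subst h; exact ⟨hWcard, hWfix⟩
        · exact hC.1 A h
      · rw [Finset.coe_insert]
        exact hC.2.insert fun A hA _ => ⟨hWU A hA, (hWU A hA).symm⟩
    have hle := hCmax (insert W C) (Finset.mem_filter.2 ⟨Finset.mem_univ _, hP'⟩)
    rw [Finset.card_insert_of_notMem hWnotin] at hle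
    omega

/-- an idempotent minion with small 1-fixing sets and bounded
antichains of onesets admits probability distributions on coordinates with
collision probability bounded below across all satisfied minor identities. -/
theorem stmt_15
    (M : ∀ n : ℕ, Set (Finset (Fin n) → Bool))
    (hminor : ∀ (n m : ℕ) (g : Finset (Fin m) → Bool) (π : Fin m → Fin n),
      g ∈ M m →
      (fun U : Finset (Fin n) => g (Finset.univ.filter (fun j => π j ∈ U))) ∈ M n)
    (hid : ∀ (n : ℕ) (f : Finset (Fin n) → Bool), f ∈ M n →
      f ∅ = false ∧ f Finset.univ = true)
    (hfix : ∃ N : ℕ, ∀ (n : ℕ) (f : Finset (Fin n) → Bool), f ∈ M n →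
      ∃ W : Finset (Fin n), W.card ≤ N ∧ ∀ V, W ⊆ V → f V = true)
    (hanti : ∃ K : ℕ, ∀ (n : ℕ) (f : Finset (Fin n) → Bool), f ∈ M n →
      ¬ ∃ U : Fin K → Finset (Fin n),
        (∀ i j : Fin K, i ≠ j → Disjoint (U i) (U j)) ∧ ∀ j, f (U j) = true) :
    ∃ ε : ℚ, 0 < ε ∧
      ∃ μ : (n : ℕ) → (Finset (Fin n) → Bool) → Fin n → ℚ,
        (∀ (n : ℕ) (f : Finset (Fin n) → Bool), f ∈ M n →
          (∀ i, 0 ≤ μ n f i) ∧ (∑ i, μ n f i) = 1) ∧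
        (∀ (n m : ℕ) (f : Finset (Fin n) → Bool) (g : Finset (Fin m) → Bool)
            (π : Fin m → Fin n), f ∈ M n → g ∈ M m →
          (∀ U : Finset (Fin n), f U = g (Finset.univ.filter (fun j => π j ∈ U))) →
          ε < ∑ j : Fin m, μ m g j * μ n f (π j)) := by
  classical
  obtain ⟨N, hN⟩ := hfix
  obtain ⟨K, hK⟩ := hanti
  have hgood : ∀ (n : ℕ) (f : Finset (Fin n) → Bool), f ∈ M n →
      ∃ U, GoodSupp N K n f U := fun n f hf =>
    exists_goodSupp N K n f (hid n f hf).1 (hN n f hf) (hK n f hf)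
  refine ⟨1 / ((N * K + 1 : ℚ) ^ 2), by positivity, ?_⟩
  refine ⟨fun n f i => if h : ∃ U, GoodSupp N K n f U then
      (if i ∈ Classical.choose h then ((Classical.choose h).card : ℚ)⁻¹ else 0) else 0,
      ?_, ?_⟩
  · intro n f hf
    constructor
    · intro i
      dsimp only
      split_ifs <;> positivity
    · have h := hgood n f hf
      have hU := Classical.choose_spec h
      dsimp only
      simp only [dif_pos h]
      rw [Finset.sum_ite_mem, Finset.univ_inter, Finset.sum_const, nsmul_eq_mul,
        mul_inv_cancel₀]
      exact_mod_cast Nat.pos_iff_ne_zero.1 hU.1.card_pos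
  · intro n m f g π hf hg hπ
    have hF := hgood n f hf
    have hG := hgood m g hg
    obtain ⟨hFne, hFcard, -, hFmax⟩ := Classical.choose_spec hF
    obtain ⟨hGne, hGcard, ⟨W, hWsub, hWcard, hWfix⟩, -⟩ := Classical.choose_spec hG
    set Uf := Classical.choose hF
    set Ug := Classical.choose hG
    -- the image of W under π is a 1-fixing set of f of size ≤ N
    have himg : ∀ V, W.image π ⊆ V → f V = true := by
      intro V hV
      rw [hπ V]
      apply hWfix
      intro j hj
      exact Finset.mem_filter.2 ⟨Finset.mem_univ _, hV (Finset.mem_image_of_mem π hj)⟩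
    have himgcard : (W.image π).card ≤ N := le_trans (Finset.card_image_le) hWcard
    obtain ⟨x, hx⟩ := hFmax (W.image π) himgcard himg
    rw [Finset.mem_inter] at hx
    obtain ⟨j, hjW, hjx⟩ := Finset.mem_image.1 hx.1
    have hjUg : j ∈ Ug := hWsub hjW
    have hjUf : π j ∈ Uf := by rw [hjx]; exact hx.2
    -- lower bound the sum by the single term at j
    have hterm : (1 : ℚ) / ((N * K + 1 : ℚ) ^ 2) <
        (if h : ∃ U, GoodSupp N K m g U then
          (if j ∈ Classical.choose h then ((Classical.choose h).card : ℚ)⁻¹ else 0) else 0) *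
        (if h : ∃ U, GoodSupp N K n f U then
          (if π j ∈ Classical.choose h then ((Classical.choose h).card : ℚ)⁻¹ else 0) else 0) := by
      rw [dif_pos hG, dif_pos hF, if_pos hjUg, if_pos hjUf]
      have ha1 : (1 : ℚ) ≤ (Ug.card : ℚ) := by exact_mod_cast hGne.card_pos
      have ha2 : (Ug.card : ℚ) ≤ (N * K : ℕ) := by exact_mod_cast hGcard
      have hb1 : (1 : ℚ) ≤ (Uf.card : ℚ) := by exact_mod_cast hFne.card_pos
      have hb2 : (Uf.card : ℚ) ≤ (N * K : ℕ) := by exact_mod_cast hFcard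
      rw [← mul_inv, ← one_div]
      apply one_div_lt_one_div_of_lt (by positivity)
      push_cast at ha2 hb2 ⊢
      nlinarith [mul_le_mul ha2 hb2 (by linarith) (by positivity)]
    refine lt_of_lt_of_le hterm ?_
    apply Finset.single_le_sum (f := fun j : Fin m =>
      (if h : ∃ U, GoodSupp N K m g U then
        (if j ∈ Classical.choose h then ((Classical.choose h).card : ℚ)⁻¹ else 0) else 0) *
      (if h : ∃ U, GoodSupp N K n f U then
        (if π j ∈ Classical.choose h then ((Classical.choose h).card : ℚ)⁻¹ else 0) else 0))
      ?_ (Finset.mem_univ j)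
    intro i _
    split_ifs <;> positivity
end

section
/- Let M be a minion of idempotent Boolean functions containing, for every odd m, an m-ary function g_m that is e-flippable (for a fixed constant e) with m ≥ 3(e+1). Then M contains either the xor functions of all odd arities, or almost negations of unboundedly large arities. Specifically: for each sufficiently large odd m, partitioning the variables of g_m into an odd number of blocks of odd sizes between e+1 and 2e+2 and identifying variables within blocks yields a function g' which is either the xor of its arity, or the 'complement-of-xor with idempotent endpoints' function h (h(U)=1 iff U is the full set, or U ≠ ∅ and |U| is even), and in the latter case identifying pairs of variables of h yields an almost negation. -/
/-!
A flippable `g` of arity `m ≥ 3(e+1)` agrees with `c xor (|U| odd)`, for a constant `c`, on all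
sets of size strictly between `e` and `m - e`. Identifying the variables of `g` within blocks of
sizes larger than `e` keeps the preimage of every proper nonempty set of blocks in that range, so
the minor only depends on the parity of the number of odd blocks a set meets. With all blocks
odd and `c = 0` the minor is the xor; with a single odd block and `c = 1` it is the almost
negation. An odd `m` admitting both kinds of block decomposition gives, for every `k`, either the
xor of arity `2k+1` or `AN_k`, and a xor has the xors of all smaller odd arities as minors.
-/

/-- The almost negation of arity m+1, as a function on subsets. -/
def ANset (m : ℕ) (U : Finset (Fin (m + 1))) : Bool :=
  if U = Finset.univ then true
  else if U = ∅ then false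
  else ! decide (Fin.last m ∈ U)

open Finset

def minor {m n : ℕ} (g : Finset (Fin m) → Bool) (π : Fin m → Fin n) (U : Finset (Fin n)) :
    Bool :=
  g (univ.filter fun j => π j ∈ U)

def xorFn (n : ℕ) (U : Finset (Fin n)) : Bool :=
  decide (#U % 2 = 1)

@[simp] lemma xorFn_apply {n : ℕ} (U : Finset (Fin n)) : xorFn n U = decide (Odd #U) := by
  simp [xorFn, Nat.odd_iff]

section Minor

variable {m n : ℕ} (g : Finset (Fin m) → Bool) (π : Fin m → Fin n)

@[simp] lemma minor_empty : minor g π ∅ = g ∅ := by simp [minor]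

@[simp] lemma minor_univ : minor g π univ = g univ := by simp [minor]

end Minor

lemma exists_card_filter_mem_eq_sum {m p : ℕ} (w : Fin p → ℕ) (hsum : ∑ i, w i = m) :
    ∃ π : Fin m → Fin p, ∀ U : Finset (Fin p),
      #(univ.filter fun j => π j ∈ U) = ∑ i ∈ U, w i := by
  let σ : Fin m ≃ (i : Fin p) × Fin (w i) := (finCongr hsum.symm).trans finSigmaFinEquiv.symm
  refine ⟨fun j => (σ j).1, fun U => ?_⟩
  rw [card_equiv σ (t := U.sigma fun _ => univ) (by simp), card_sigma]
  simp

lemma sum_mem_Ioo_of_forall_lt {p e : ℕ} {w : Fin p → ℕ} (hw : ∀ i, e < w i)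
    {U : Finset (Fin p)} (hU : U.Nonempty) (hU' : U ≠ univ) :
    ∑ i ∈ U, w i ∈ Set.Ioo e ((∑ i, w i) - e) := by
  have hlt : ∀ {V : Finset (Fin p)}, V.Nonempty → e < ∑ i ∈ V, w i := fun ⟨i, hi⟩ =>
    (hw i).trans_le (single_le_sum (fun _ _ => Nat.zero_le _) hi)
  have hcompl := hlt (by rwa [nonempty_iff_ne_empty, Ne, compl_eq_empty_iff] : Uᶜ.Nonempty)
  have := sum_add_sum_compl U w
  exact ⟨hlt hU, by omega⟩

def blockSizes (p b m : ℕ) (i : Fin (p + 1)) : ℕ :=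
  if i = Fin.last p then m - p * b else b

lemma sum_blockSizes {p b m : ℕ} (h : p * b ≤ m) : ∑ i, blockSizes p b m i = m := by
  simp [Fin.sum_univ_castSucc, blockSizes, Fin.castSucc_ne_last]
  omega

lemma lt_blockSizes {e p b m : ℕ} (hb : e < b) (hm : e < m - p * b) (i : Fin (p + 1)) :
    e < blockSizes p b m i := by
  unfold blockSizes; split_ifs <;> assumption

lemma odd_blockSizes {p b m : ℕ} (hb : Odd b) (hm : Odd (m - p * b)) (i : Fin (p + 1)) :
    Odd (blockSizes p b m i) := by
  unfold blockSizes; split_ifs <;> assumption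

lemma odd_blockSizes_iff {p b m : ℕ} (hb : Even b) (hm : Odd (m - p * b)) (i : Fin (p + 1)) :
    Odd (blockSizes p b m i) ↔ i = Fin.last p := by
  unfold blockSizes; split_ifs with h <;> simp [h, hm, Nat.not_odd_iff_even.2 hb]

def Flippable (e : ℕ) {m : ℕ} (g : Finset (Fin m) → Bool) : Prop :=
  ∀ U : Finset (Fin m), e < #U → #U < m - e →
    ∀ x ∉ U, ∀ y ∈ U, g (U.erase y) ≠ g U ∧ g (insert x U) ≠ g U

namespace Flippable

variable {e m : ℕ} {g : Finset (Fin m) → Bool}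

lemma apply_insert (hg : Flippable e g) {U : Finset (Fin m)} (h₁ : e < #U) (h₂ : #U < m - e)
    {x : Fin m} (hx : x ∉ U) : g (insert x U) = !g U := by
  obtain ⟨y, hy⟩ := card_pos.1 (by omega : 0 < #U)
  exact Bool.eq_not_iff.2 (hg U h₁ h₂ x hx y hy).2

lemma bne_odd_card_union (hg : Flippable e g) {U D : Finset (Fin m)} (hUD : Disjoint U D)
    (h₁ : e < #U) (h₂ : #(U ∪ D) ≤ m - e) :
    (g (U ∪ D) != decide (Odd #(U ∪ D))) = (g U != decide (Odd #U)) := by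
  induction D using Finset.induction_on with
  | empty => simp
  | insert a D ha ih =>
    rw [disjoint_insert_right] at hUD
    have haUD : a ∉ U ∪ D := by simp [ha, hUD.1]
    rw [union_insert, card_insert_of_notMem haUD] at h₂ ⊢
    have hle : #U ≤ #(U ∪ D) := card_le_card subset_union_left
    rw [hg.apply_insert (by omega) (by omega) haUD, ← ih hUD.2 (by omega)]
    simp only [Nat.odd_add_one, decide_not, Bool.not_bne_not]

lemma bne_odd_card_eq_of_subset (hg : Flippable e g) {U V : Finset (Fin m)} (hUV : U ⊆ V)
    (h₁ : e < #U) (h₂ : #V ≤ m - e) :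
    (g V != decide (Odd #V)) = (g U != decide (Odd #U)) := by
  have hV := union_sdiff_of_subset hUV
  have h := hg.bne_odd_card_union disjoint_sdiff h₁ (by rwa [hV])
  rwa [hV] at h

lemma exists_eq_bne_odd_card (hg : Flippable e g) (hm : 3 * (e + 1) ≤ m) :
    ∃ c : Bool, ∀ U : Finset (Fin m), e < #U → #U < m - e → g U = (c != decide (Odd #U)) := by
  obtain ⟨W, -, hW⟩ := exists_subset_card_eq (s := (univ : Finset (Fin m))) (n := e + 1)
    (by simp; omega)
  refine ⟨g W != decide (Odd #W), fun U h₁ h₂ => ?_⟩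
  obtain ⟨U₀, hU₀U, hU₀⟩ := exists_subset_card_eq (s := U) (n := e + 1) (by omega)
  have hunion : #(U₀ ∪ W) ≤ m - e := (card_union_le _ _).trans (by omega)
  have hU : (g U != decide (Odd #U)) = (g W != decide (Odd #W)) := calc
    _ = (g U₀ != decide (Odd #U₀)) := hg.bne_odd_card_eq_of_subset hU₀U (by omega) h₂.le
    _ = (g (U₀ ∪ W) != decide (Odd #(U₀ ∪ W))) :=
      (hg.bne_odd_card_eq_of_subset subset_union_left (by omega) hunion).symm
    _ = _ := hg.bne_odd_card_eq_of_subset subset_union_right (by omega) hunion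
  rw [← hU]
  simp

end Flippable

lemma minor_eq_bne_odd_card_filter {e m p : ℕ} {g : Finset (Fin m) → Bool} {c : Bool}
    (hg : ∀ U : Finset (Fin m), e < #U → #U < m - e → g U = (c != decide (Odd #U)))
    {w : Fin p → ℕ} (hw : ∀ i, e < w i) (hsum : ∑ i, w i = m) {π : Fin m → Fin p}
    (hπ : ∀ U, #(univ.filter fun j => π j ∈ U) = ∑ i ∈ U, w i)
    {U : Finset (Fin p)} (hU : U.Nonempty) (hU' : U ≠ univ) :
    minor g π U = (c != decide (Odd #(U.filter fun i => Odd (w i)))) := by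
  obtain ⟨h₁, h₂⟩ := sum_mem_Ioo_of_forall_lt hw hU hU'
  rw [minor, hg _ (by rwa [hπ]) (by rw [hπ]; omega), hπ]
  simp only [odd_sum_iff_odd_card_odd]

lemma minor_eq_xorFn {e m p : ℕ} {g : Finset (Fin m) → Bool} (h₀ : g ∅ = false)
    (h₁ : g univ = true) (hg : ∀ U : Finset (Fin m), e < #U → #U < m - e → g U = xorFn m U)
    (hp : Odd p) {w : Fin p → ℕ} (hw : ∀ i, e < w i) (hodd : ∀ i, Odd (w i))
    (hsum : ∑ i, w i = m) {π : Fin m → Fin p}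
    (hπ : ∀ U, #(univ.filter fun j => π j ∈ U) = ∑ i ∈ U, w i) :
    minor g π = xorFn p := by
  funext U
  rcases U.eq_empty_or_nonempty with rfl | hU
  · simp [h₀]
  by_cases hU' : U = univ
  · subst hU'
    simpa [h₁] using hp
  rw [minor_eq_bne_odd_card_filter (c := false) (by simpa using hg) hw hsum hπ hU hU']
  simp [hodd, Nat.odd_iff]

lemma minor_eq_ANset {e m k : ℕ} {g : Finset (Fin m) → Bool} (h₀ : g ∅ = false)
    (h₁ : g univ = true) (hg : ∀ U : Finset (Fin m), e < #U → #U < m - e → g U = !decide (Odd #U))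
    {w : Fin (k + 1) → ℕ} (hw : ∀ i, e < w i) (hodd : ∀ i, Odd (w i) ↔ i = Fin.last k)
    (hsum : ∑ i, w i = m) {π : Fin m → Fin (k + 1)}
    (hπ : ∀ U, #(univ.filter fun j => π j ∈ U) = ∑ i ∈ U, w i) :
    minor g π = ANset k := by
  funext U
  unfold ANset
  split_ifs with hU' hU
  · simp [hU', h₁]
  · simp [hU, h₀]
  rw [minor_eq_bne_odd_card_filter (c := true) (by simpa using hg) hw hsum hπ
    (nonempty_iff_ne_empty.2 hU) hU']
  simp only [hodd, filter_eq', Bool.true_bne]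
  split_ifs <;> simp [*]

def IsMinorClosed (M : ∀ n : ℕ, Set (Finset (Fin n) → Bool)) : Prop :=
  ∀ (n m : ℕ) (g : Finset (Fin m) → Bool) (π : Fin m → Fin n), g ∈ M m → minor g π ∈ M n

section Minion

variable {M : ∀ n : ℕ, Set (Finset (Fin n) → Bool)}

lemma xor_mem_of_le (hminor : IsMinorClosed M) {N n : ℕ} (hN : Odd N) (hn : Odd n) (hnN : n ≤ N)
    (hxor : xorFn N ∈ M N) : xorFn n ∈ M n := by
  obtain ⟨j, rfl⟩ := hn
  have hlast : Odd (N - 2 * j * 1) := Nat.Odd.sub_even (by omega) hN (by simp)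
  obtain ⟨π, hπ⟩ :=
    exists_card_filter_mem_eq_sum _ (sum_blockSizes (p := 2 * j) (b := 1) (m := N) (by omega))
  rw [← minor_eq_xorFn (e := 0) (g := xorFn N) (by simp) (by simpa using hN)
    (fun _ _ _ => rfl) (by simp) (lt_blockSizes one_pos (by omega))
    (odd_blockSizes odd_one hlast) (sum_blockSizes (by omega)) hπ]
  exact hminor _ _ _ π hxor

lemma xor_mem_or_ANset_mem {e : ℕ} (hminor : IsMinorClosed M)
    (hid : ∀ n, ∀ f ∈ M n, f ∅ = false ∧ f univ = true)
    (hflip : ∀ m, Odd m → 3 * (e + 1) ≤ m → ∃ g ∈ M m, Flippable e g) (k : ℕ) :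
    xorFn (2 * k + 1) ∈ M (2 * k + 1) ∨ ANset k ∈ M (k + 1) := by
  -- `m` splits both into `2k` blocks of odd size `2e+1` and into `k` blocks of even size `2e+2`,
  -- each time plus one odd block larger than `e`.
  obtain ⟨t, ht⟩ : ∃ t, t = k * e := ⟨_, rfl⟩
  have hodd_blocks : 2 * k * (2 * e + 1) = 4 * t + 2 * k := by rw [ht]; ring
  have heven_blocks : k * (2 * e + 2) = 2 * t + 2 * k := by rw [ht]; ring
  set m := 4 * t + 4 * k + 6 * e + 7
  obtain ⟨g, hgM, hg⟩ := hflip m ⟨2 * t + 2 * k + 3 * e + 3, by omega⟩ (by omega)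
  obtain ⟨h₀, h₁⟩ := hid m g hgM
  obtain ⟨c, hc⟩ := hg.exists_eq_bne_odd_card (by omega)
  cases c
  · left
    have hsum := sum_blockSizes (p := 2 * k) (b := 2 * e + 1) (m := m) (by omega)
    obtain ⟨π, hπ⟩ := exists_card_filter_mem_eq_sum _ hsum
    rw [← minor_eq_xorFn h₀ h₁ (by simpa using hc) (by simp) (lt_blockSizes (by omega) (by omega))
      (odd_blockSizes (odd_two_mul_add_one e) ⟨k + 3 * e + 3, by omega⟩) hsum hπ]
    exact hminor _ _ g π hgM
  · right
    have hsum := sum_blockSizes (p := k) (b := 2 * e + 2) (m := m) (by omega)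
    obtain ⟨π, hπ⟩ := exists_card_filter_mem_eq_sum _ hsum
    rw [← minor_eq_ANset h₀ h₁ (by simpa using hc) (lt_blockSizes (by omega) (by omega))
      (odd_blockSizes_iff ⟨e + 1, by omega⟩ ⟨t + k + 3 * e + 3, by omega⟩) hsum hπ]
    exact hminor _ _ g π hgM

end Minion

/-- an idempotent minion containing e-flippable functions of all
sufficiently large odd arities contains all odd-arity xors or almost negations
of unboundedly large arities. -/
theorem stmt_17 (e : ℕ) (M : ∀ n : ℕ, Set (Finset (Fin n) → Bool))
    (hminor : ∀ (n m : ℕ) (g : Finset (Fin m) → Bool) (π : Fin m → Fin n),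
      g ∈ M m →
      (fun U : Finset (Fin n) => g (Finset.univ.filter (fun j => π j ∈ U))) ∈ M n)
    (hid : ∀ (n : ℕ) (f : Finset (Fin n) → Bool), f ∈ M n →
      f ∅ = false ∧ f Finset.univ = true)
    (hflip : ∀ m : ℕ, Odd m → 3 * (e + 1) ≤ m →
      ∃ g ∈ M m, ∀ U : Finset (Fin m), e < U.card → U.card < m - e →
        ∀ x ∉ U, ∀ y ∈ U, g (U.erase y) ≠ g U ∧ g (insert x U) ≠ g U) :
    (∀ m : ℕ, Odd m →
      (fun U : Finset (Fin m) => decide (U.card % 2 = 1)) ∈ M m)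
    ∨
    (∀ B : ℕ, ∃ m : ℕ, B ≤ m ∧ ANset m ∈ M (m + 1)) := by
  refine or_iff_not_imp_left.2 fun hxor B => ?_
  push Not at hxor
  obtain ⟨n, hn, hn_not⟩ := hxor
  have hk := le_max_right B n
  refine ⟨max B n, le_max_left B n, ?_⟩
  refine (xor_mem_or_ANset_mem hminor hid hflip (max B n)).resolve_left fun h => hn_not ?_
  exact xor_mem_of_le hminor (by simp) hn (by omega) h
end

section
/- Let f be an idempotent 2k-ary Boolean function that is e-flippable with 2k ≥ 3(e+1). Suppose the blocks of some partition of the 2k variables into parts of even sizes between e+1 and 2e+2 are identified, yielding a function g' of arity m ≥ 2. Then g' is either the m-ary min (conjunction) or the m-ary max (disjunction). -/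
private lemma bool_trans {a b c : Bool} (h1 : a ≠ b) (h2 : c ≠ b) : a = c := by
  cases a <;> cases b <;> cases c <;> simp_all

/-- f is constant on sets of equal size in the flippable range. -/
private lemma same_size {N e : ℕ} (f : Finset (Fin N) → Bool)
    (hflip : ∀ U : Finset (Fin N), e < U.card → U.card < N - e →
      ∀ x ∉ U, ∀ y ∈ U, f (U.erase y) ≠ f U ∧ f (insert x U) ≠ f U) :
    ∀ U V : Finset (Fin N), U.card = V.card → e < U.card → U.card < N - e → f U = f V := by
  suffices H : ∀ d (U V : Finset (Fin N)), (V \ U).card = d → U.card = V.card →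
      e < U.card → U.card < N - e → f U = f V by
    intro U V h1 h2 h3; exact H _ U V rfl h1 h2 h3
  intro d
  induction d with
  | zero =>
    intro U V hd hcard _ _
    have hsub : V ⊆ U := by
      rw [Finset.card_eq_zero, Finset.sdiff_eq_empty_iff_subset] at hd; exact hd
    have : V = U := Finset.eq_of_subset_of_card_le hsub hcard.le
    rw [this]
  | succ d ih =>
    intro U V hd hcard hlo hhi
    have hVU : (V \ U).Nonempty := by
      rw [← Finset.card_pos, hd]; omega
    obtain ⟨x, hx⟩ := hVU
    have hxV : x ∈ V := (Finset.mem_sdiff.mp hx).1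
    have hxU : x ∉ U := (Finset.mem_sdiff.mp hx).2
    have hUV : (U \ V).Nonempty := by
      rw [← Finset.card_pos, Finset.card_sdiff_comm hcard, hd]
      omega
    obtain ⟨y, hy⟩ := hUV
    have hyU : y ∈ U := (Finset.mem_sdiff.mp hy).1
    have hyV : y ∉ V := (Finset.mem_sdiff.mp hy).2
    have hxy : x ≠ y := fun h => hyV (h ▸ hxV)
    set W : Finset (Fin N) := insert x (U.erase y) with hW
    have hxnotin : x ∉ U.erase y := fun h => hxU (Finset.mem_of_mem_erase h)
    have hWcard : W.card = U.card := by
      rw [hW, Finset.card_insert_of_notMem hxnotin, Finset.card_erase_of_mem hyU]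
      have : 0 < U.card := Finset.card_pos.mpr ⟨y, hyU⟩
      omega
    -- f U = f W
    have hflipU := (hflip U hlo hhi x hxU y hyU).1
    have hyW : y ∉ W := by
      simp [hW, Finset.mem_insert, Finset.mem_erase, hxy.symm]
    have hxW : x ∈ W := Finset.mem_insert_self _ _
    have hflipW := (hflip W (hWcard ▸ hlo) (hWcard ▸ hhi) y hyW x hxW).1
    have hWer : W.erase x = U.erase y := by
      rw [hW, Finset.erase_insert hxnotin]
    rw [hWer] at hflipW
    have hfUW : f U = f W := bool_trans hflipU.symm hflipW.symm
    -- induction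
    have hVW : V \ W = (V \ U).erase x := by
      ext z
      simp only [hW, Finset.mem_sdiff, Finset.mem_insert, Finset.mem_erase,
        Finset.mem_sdiff]
      constructor
      · rintro ⟨hzV, hz⟩
        push_neg at hz
        exact ⟨hz.1, hzV, fun hzU => hz.2 (fun hzy => hyV (hzy ▸ hzV)) hzU⟩
      · rintro ⟨hzx, hzV, hzU⟩
        exact ⟨hzV, by push_neg; exact ⟨hzx, fun _ => hzU⟩⟩
    have hVWcard : (V \ W).card = d := by
      rw [hVW, Finset.card_erase_of_mem hx, hd]; omega
    have := ih W V hVWcard (hWcard ▸ hcard) (hWcard ▸ hlo) (hWcard ▸ hhi)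
    rw [hfUW, this]

/-- f depends only on parity of size in the flippable range. -/
private lemma parity_lemma {N e : ℕ} (f : Finset (Fin N) → Bool)
    (hflip : ∀ U : Finset (Fin N), e < U.card → U.card < N - e →
      ∀ x ∉ U, ∀ y ∈ U, f (U.erase y) ≠ f U ∧ f (insert x U) ≠ f U) :
    ∀ U V : Finset (Fin N), U.card % 2 = V.card % 2 →
      e < U.card → U.card < N - e → e < V.card → V.card < N - e → f U = f V := by
  suffices H : ∀ d (U V : Finset (Fin N)), V.card = U.card + 2 * d →
      e < U.card → U.card < N - e → V.card < N - e → f U = f V by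
    intro U V hpar hUlo hUhi hVlo hVhi
    rcases le_total U.card V.card with h | h
    · obtain ⟨d, hd⟩ : ∃ d, V.card = U.card + 2 * d := ⟨(V.card - U.card)/2, by omega⟩
      exact H d U V hd hUlo hUhi hVhi
    · obtain ⟨d, hd⟩ : ∃ d, U.card = V.card + 2 * d := ⟨(U.card - V.card)/2, by omega⟩
      exact (H d V U hd hVlo hVhi hUhi).symm
  intro d
  induction d with
  | zero =>
    intro U V hd hlo hhi _
    exact same_size f hflip U V (by omega) hlo hhi
  | succ d ih =>
    intro U V hd hUlo hUhi hVhi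
    have hVlo : e < V.card := by omega
    have hV1 : (V : Finset (Fin N)).Nonempty := Finset.card_pos.mp (by omega)
    obtain ⟨y, hy⟩ := hV1
    have hcompl : ∃ x, x ∉ V := by
      by_contra h; push_neg at h
      have : V = Finset.univ := Finset.eq_univ_iff_forall.mpr h
      have : V.card = N := by rw [this]; simp
      omega
    obtain ⟨x, hx⟩ := hcompl
    have hflipV := (hflip V hVlo hVhi x hx y hy).1
    have hcard1 : (V.erase y).card = V.card - 1 := Finset.card_erase_of_mem hy
    have hlo1 : e < (V.erase y).card := by omega
    have hhi1 : (V.erase y).card < N - e := by omega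
    have hV2 : (V.erase y).Nonempty := Finset.card_pos.mp (by omega)
    obtain ⟨z, hz⟩ := hV2
    have hx2 : x ∉ V.erase y := fun h => hx (Finset.mem_of_mem_erase h)
    have hflipV2 := (hflip (V.erase y) hlo1 hhi1 x hx2 z hz).1
    have hcard2 : ((V.erase y).erase z).card = V.card - 2 := by
      rw [Finset.card_erase_of_mem hz, hcard1]; omega
    have : f U = f ((V.erase y).erase z) := by
      apply ih U _ (by omega) hUlo hUhi (by omega)
    rw [this]
    exact bool_trans hflipV2 hflipV.symm

/-- identifying blocks of even size between e+1 and 2e+2 in an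
idempotent e-flippable function of even arity yields a min or a max. -/
theorem stmt_19 (k e m : ℕ) (hm : 2 ≤ m) (hk : 3 * (e + 1) ≤ 2 * k)
    (f : Finset (Fin (2 * k)) → Bool)
    (hid0 : f ∅ = false) (hid1 : f Finset.univ = true)
    (hflip : ∀ U : Finset (Fin (2 * k)), e < U.card → U.card < 2 * k - e →
      ∀ x ∉ U, ∀ y ∈ U, f (U.erase y) ≠ f U ∧ f (insert x U) ≠ f U)
    (B : Fin m → Finset (Fin (2 * k)))
    (hdisj : ∀ i j : Fin m, i ≠ j → Disjoint (B i) (B j))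
    (hcover : Finset.univ.biUnion B = Finset.univ)
    (hsize : ∀ i, Even (B i).card ∧ e + 1 ≤ (B i).card ∧ (B i).card ≤ 2 * e + 2) :
    (∀ S : Finset (Fin m), f (S.biUnion B) = decide (S = Finset.univ))
    ∨
    (∀ S : Finset (Fin m), f (S.biUnion B) = decide (S ≠ ∅)) := by
  have hcardbi : ∀ S : Finset (Fin m), (S.biUnion B).card = ∑ i ∈ S, (B i).card := by
    intro S
    exact Finset.card_biUnion (fun i _ j _ hij => hdisj i j hij)
  have htot : ∑ i : Fin m, (B i).card = 2 * k := by
    have := hcardbi Finset.univ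
    rw [hcover] at this
    simpa using this.symm
  -- size bounds for proper nonempty S
  have hbounds : ∀ S : Finset (Fin m), S.Nonempty → S ≠ Finset.univ →
      e < (S.biUnion B).card ∧ (S.biUnion B).card < 2 * k - e ∧
      Even (S.biUnion B).card := by
    intro S hSne hSnu
    obtain ⟨i, hi⟩ := hSne
    obtain ⟨j, hj⟩ : ∃ j, j ∉ S := by
      by_contra h; push_neg at h
      exact hSnu (Finset.eq_univ_iff_forall.mpr h)
    rw [hcardbi]
    refine ⟨?_, ?_, ?_⟩
    · have h1 : (B i).card ≤ ∑ i ∈ S, (B i).card :=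
        Finset.single_le_sum (f := fun i => (B i).card) (fun _ _ => Nat.zero_le _) hi
      have := (hsize i).2.1; omega
    · have hsplit : ∑ i ∈ S, (B i).card + ∑ i ∈ Sᶜ, (B i).card = 2 * k := by
        rw [Finset.sum_add_sum_compl]; exact htot
      have hjc : j ∈ Sᶜ := Finset.mem_compl.mpr hj
      have h1 : (B j).card ≤ ∑ i ∈ Sᶜ, (B i).card :=
        Finset.single_le_sum (f := fun i => (B i).card) (fun _ _ => Nat.zero_le _) hjc
      have := (hsize j).2.1; omega
    · exact Finset.even_sum _ (fun i _ => (hsize i).1)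
  -- reference set
  obtain ⟨i0, i1, h01⟩ : ∃ a b : Fin m, a ≠ b :=
    ⟨⟨0, by omega⟩, ⟨1, by omega⟩, by intro h; simpa using congrArg Fin.val h⟩
  have hS0ne : ({i0} : Finset (Fin m)).Nonempty := ⟨i0, Finset.mem_singleton_self _⟩
  have hS0nu : ({i0} : Finset (Fin m)) ≠ Finset.univ := by
    intro h
    have : i1 ∈ ({i0} : Finset (Fin m)) := h ▸ Finset.mem_univ _
    exact h01 (Finset.mem_singleton.mp this).symm
  have hconst : ∀ S : Finset (Fin m), S.Nonempty → S ≠ Finset.univ →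
      f (S.biUnion B) = f (({i0} : Finset (Fin m)).biUnion B) := by
    intro S hne hnu
    obtain ⟨h1, h2, h3⟩ := hbounds S hne hnu
    obtain ⟨h1', h2', h3'⟩ := hbounds _ hS0ne hS0nu
    obtain ⟨a, ha⟩ := h3
    obtain ⟨b, hb⟩ := h3'
    exact parity_lemma f hflip _ _ (by omega) h1 h2 h1' h2'
  have hU : (Finset.univ : Finset (Fin m)).biUnion B = Finset.univ := hcover
  have hE : (∅ : Finset (Fin m)).biUnion B = ∅ := Finset.biUnion_empty
  cases hc : f (({i0} : Finset (Fin m)).biUnion B) with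
  | false =>
    left
    intro S
    by_cases hSu : S = Finset.univ
    · subst hSu; rw [hU, hid1]; simp
    by_cases hSe : S = ∅
    · subst hSe; rw [hE, hid0]
      have : (∅ : Finset (Fin m)) ≠ Finset.univ := by
        intro h
        have : i0 ∈ (∅ : Finset (Fin m)) := h ▸ Finset.mem_univ _
        simpa using this
      simp [this]
    · rw [hconst S (Finset.nonempty_of_ne_empty hSe) hSu, hc]
      simp [hSu]
  | true =>
    right
    intro S
    by_cases hSe : S = ∅
    · subst hSe; rw [hE, hid0]; simp
    by_cases hSu : S = Finset.univ
    · subst hSu; rw [hU, hid1]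
      have : (Finset.univ : Finset (Fin m)) ≠ ∅ := by
        intro h
        have : i0 ∈ (∅ : Finset (Fin m)) := h ▸ Finset.mem_univ _
        simpa using this
      simp [this]
    · rw [hconst S (Finset.nonempty_of_ne_empty hSe) hSu, hc]
      simp [hSe]
end
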